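/- arXiv:math/0406179 — 2 statements merged into one kernel-verified Lean document; each statement's English description precedes it below -/
import Mathlib

section
/- If f : R → R² is a continuous embedding of the long ray into its square (with coordinate projections π₁, π₂), then at least one of π₁ ∘ f, π₂ ∘ f is cofinal in R; i.e., the direction (0,0) is not realized by any embedding. -/
open Set Topology
noncomputable section

/-- The first uncountable ordinal ω₁. -/
def omega1 : Ordinal := Ordinal.omega 1

/-- The closed long ray `R = W(ω₁) × [0,1)` with the lexicographic order. -/
def LongRay : Type 1 := {o : Ordinal // o < omega1} ×ₗ (Set.Ico (0:ℝ) 1)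

instance : LinearOrder LongRay :=
  inferInstanceAs (LinearOrder ({o : Ordinal // o < omega1} ×ₗ (Set.Ico (0:ℝ) 1)))

/-- The order topology on the long ray. -/
instance : TopologicalSpace LongRay := Preorder.topology LongRay
instance : OrderTopology LongRay := ⟨rfl⟩

/-- The minimum point `(0,0)` of the long ray. -/
instance : Zero LongRay :=
  ⟨toLex (⟨0, Ordinal.omega_pos 1⟩, ⟨0, by constructor <;> norm_num⟩)⟩

/-- A map `R → R` is cofinal if its image is unbounded in `R`. -/
def Cofinal (f : LongRay → LongRay) : Prop := ∀ b, ∃ x, b ≤ f x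

/-- A map `R → R` is bounded if its image has an upper bound in `R`. -/
def BddMap (f : LongRay → LongRay) : Prop := ∃ b, ∀ x, f x ≤ b

/-!
Every countable subset of the long ray is bounded above. Hence monotone sequences converge, and
two closed unbounded sets `A`, `B` meet: an increasing sequence alternating between them has its
limit in both. For a bounded continuous `g : R → R` and `d < d'` the closed sets `{g ≤ d}` and
`{g ≥ d'}` are disjoint, so one of them is bounded. Below the bound of `g` there are countably
many points with rational fractional part and they are dense, so one threshold works for all
pairs of them at once, and beyond it `g` is constant. If both coordinates of `f` were bounded,
`f` would be eventually constant, which contradicts injectivity.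
-/

open Filter

lemma Ordinal.countable_Iio_of_lt_omega1 {o : Ordinal.{u}} (h : o < omega1.{u}) :
    (Iio o).Countable := by
  rw [← Cardinal.le_aleph0_iff_set_countable, Cardinal.mk_Iio_ordinal, Cardinal.lift_le_aleph0,
    ← Cardinal.lt_aleph_one_iff, ← Cardinal.lt_omega_iff_card_lt]
  exact h

lemma Ordinal.succ_lt_omega1 {o : Ordinal.{u}} (h : o < omega1.{u}) : Order.succ o < omega1 :=
  (Cardinal.isSuccLimit_omega 1).succ_lt h

namespace LongRay

def level (x : LongRay) : Ordinal := (ofLex x).1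

def frac (x : LongRay) : ℝ := (ofLex x).2

lemma level_lt_omega1 (x : LongRay) : level x < omega1 := (ofLex x).1.2

lemma frac_mem_Ico (x : LongRay) : frac x ∈ Ico 0 1 := (ofLex x).2.2

def mk (o : Ordinal) (ho : o < omega1) (t : ℝ) (ht : t ∈ Ico 0 1) : LongRay :=
  toLex (⟨o, ho⟩, ⟨t, ht⟩)

lemma le_iff {x y : LongRay} :
    x ≤ y ↔ level x < level y ∨ level x = level y ∧ frac x ≤ frac y :=
  Prod.Lex.le_iff.trans (by simp only [level, frac, Subtype.coe_lt_coe, Subtype.ext_iff,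
    Subtype.coe_le_coe])

lemma lt_iff {x y : LongRay} :
    x < y ↔ level x < level y ∨ level x = level y ∧ frac x < frac y :=
  Prod.Lex.lt_iff.trans (by simp only [level, frac, Subtype.coe_lt_coe, Subtype.ext_iff])

lemma ext {x y : LongRay} (h₁ : level x = level y) (h₂ : frac x = frac y) : x = y :=
  congrArg toLex (Prod.ext (Subtype.ext h₁) (Subtype.ext h₂))

instance : NoMaxOrder LongRay :=
  inferInstanceAs (NoMaxOrder ({o : Ordinal // o < omega1} ×ₗ Ico (0:ℝ) 1))

lemma level_mono : Monotone level := fun _ _ h =>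
  (le_iff.1 h).elim le_of_lt fun h => h.1.le

lemma frac_le_of_le_of_level_eq {x y : LongRay} (h : x ≤ y) (hl : level x = level y) :
    frac x ≤ frac y :=
  (le_iff.1 h).resolve_left hl.not_lt |>.2

lemma bddAbove_of_countable {S : Set LongRay} (hS : S.Countable) : BddAbove S := by
  have : Countable S := hS.to_subtype
  have hβ : ⨆ x : S, level x < omega1 := Ordinal.iSup_lt_omega_one fun x => level_lt_omega1 x
  refine ⟨mk _ (Ordinal.succ_lt_omega1 hβ) 0 (by simp), fun x hx => le_iff.2 (Or.inl ?_)⟩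
  exact Order.lt_succ_iff.2 (Ordinal.le_iSup (fun x : S => level x) ⟨x, hx⟩)

lemma exists_isGLB {S : Set LongRay} (hS : S.Nonempty) : ∃ l, IsGLB S l := by
  obtain ⟨x₀, hx₀, hmin⟩ := (InvImage.wf level wellFounded_lt).has_min S hS
  replace hmin : ∀ x ∈ S, level x₀ ≤ level x := fun x hx => not_lt.1 (hmin x hx)
  set T := frac '' {x ∈ S | level x = level x₀}
  have hT : T.Nonempty := ⟨_, ⟨x₀, ⟨hx₀, rfl⟩, rfl⟩⟩
  have hT₀ : ∀ t ∈ T, 0 ≤ t := by rintro _ ⟨x, -, rfl⟩; exact (frac_mem_Ico x).1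
  have hr : sInf T ∈ Ico 0 1 :=
    ⟨le_csInf hT hT₀, (csInf_le ⟨0, hT₀⟩ ⟨x₀, ⟨hx₀, rfl⟩, rfl⟩).trans_lt (frac_mem_Ico x₀).2⟩
  refine ⟨mk _ (level_lt_omega1 x₀) _ hr, fun x hx => ?_, fun u hu => ?_⟩
  · rcases (hmin x hx).lt_or_eq with h | h
    · exact le_iff.2 (Or.inl h)
    · exact le_iff.2 (Or.inr ⟨h, csInf_le ⟨0, hT₀⟩ ⟨x, ⟨hx, h.symm⟩, rfl⟩⟩)
  · rcases (level_mono (hu hx₀)).lt_or_eq with h | h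
    · exact le_iff.2 (Or.inl h)
    · refine le_iff.2 (Or.inr ⟨h, le_csInf hT ?_⟩)
      rintro _ ⟨x, ⟨hx, hx'⟩, rfl⟩
      exact frac_le_of_le_of_level_eq (hu hx) (h.trans hx'.symm)

lemma exists_isLUB {S : Set LongRay} (hS : BddAbove S) : ∃ l, IsLUB S l :=
  (exists_isGLB hS).imp fun _ => isGLB_upperBounds.1

lemma exists_tendsto_of_monotone {u : ℕ → LongRay} (hu : Monotone u) :
    ∃ s, Tendsto u atTop (𝓝 s) :=
  (exists_isLUB (bddAbove_of_countable (countable_range u))).imp fun _ =>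
    tendsto_atTop_isLUB hu

instance : CountableInterFilter (atTop : Filter LongRay) where
  countable_sInter_mem S hS hmem := by
    choose! a ha using fun s hs => mem_atTop_sets.1 (hmem s hs)
    obtain ⟨b, hb⟩ := bddAbove_of_countable (hS.image a)
    exact mem_atTop_sets.2
      ⟨b, fun x hx s hs => ha s hs x ((hb (mem_image_of_mem a hs)).trans hx)⟩

lemma exists_frac_rat_between {x y : LongRay} (h : x < y) :
    ∃ z, x < z ∧ z < y ∧ frac z ∈ range ((↑) : ℚ → ℝ) := by
  have hx := frac_mem_Ico x
  rcases lt_iff.1 h with hl | ⟨hl, hf⟩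
  · obtain ⟨q, hq₁, hq₂⟩ := exists_rat_btwn hx.2
    exact ⟨mk _ (level_lt_omega1 x) q ⟨hx.1.trans hq₁.le, hq₂⟩, lt_iff.2 (Or.inr ⟨rfl, hq₁⟩),
      lt_iff.2 (Or.inl hl), q, rfl⟩
  · obtain ⟨q, hq₁, hq₂⟩ := exists_rat_btwn hf
    exact ⟨mk _ (level_lt_omega1 x) q ⟨hx.1.trans hq₁.le, hq₂.trans (frac_mem_Ico y).2⟩,
      lt_iff.2 (Or.inr ⟨rfl, hq₁⟩), lt_iff.2 (Or.inr ⟨hl, hq₂⟩), q, rfl⟩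

lemma countable_setOf_le_frac_rat (b : LongRay) :
    {x | x ≤ b ∧ frac x ∈ range ((↑) : ℚ → ℝ)}.Countable := by
  refine MapsTo.countable_of_injOn (f := fun x => (level x, frac x))
    (t := Iio (Order.succ (level b)) ×ˢ range ((↑) : ℚ → ℝ)) ?_ ?_ ?_
  · exact fun x hx => ⟨Order.lt_succ_iff.2 (level_mono hx.1), hx.2⟩
  · exact fun x _ y _ h => ext (congrArg Prod.fst h) (congrArg Prod.snd h)
  · exact (Ordinal.countable_Iio_of_lt_omega1 (Ordinal.succ_lt_omega1 (level_lt_omega1 b))).prod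
      (countable_range _)

lemma inter_nonempty_of_frequently {A B : Set LongRay} (hA : IsClosed A) (hB : IsClosed B)
    (hA' : ∃ᶠ x in atTop, x ∈ A) (hB' : ∃ᶠ x in atTop, x ∈ B) : (A ∩ B).Nonempty := by
  choose a hle_a haA using frequently_atTop.1 hA'
  choose b hle_b hbB using frequently_atTop.1 hB'
  let v : ℕ → LongRay := fun n => Nat.rec (a 0) (fun _ w => a (b w)) n
  have hvA : ∀ n, v n ∈ A := fun n => by cases n <;> exact haA _
  have hbv : ∀ n, b (v n) ≤ v (n + 1) := fun n => hle_a _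
  obtain ⟨s, hs⟩ :=
    exists_tendsto_of_monotone (monotone_nat_of_le_succ fun n => (hle_b _).trans (hbv n))
  have hbs : Tendsto (b ∘ v) atTop (𝓝 s) := tendsto_of_tendsto_of_tendsto_of_le_of_le hs
    (hs.comp (tendsto_add_atTop_nat 1)) (fun _ => hle_b _) hbv
  exact ⟨s, hA.mem_of_tendsto hs (.of_forall hvA),
    hB.mem_of_tendsto hbs (.of_forall fun _ => hbB _)⟩

lemma eventually_gt_or_eventually_lt {α : Type*} [LinearOrder α] [TopologicalSpace α]
    [OrderClosedTopology α] {g : LongRay → α} (hg : Continuous g) {d d' : α} (h : d < d') :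
    (∀ᶠ x in atTop, d < g x) ∨ ∀ᶠ x in atTop, g x < d' := by
  by_contra hcon
  rw [not_or, not_eventually, not_eventually] at hcon
  obtain ⟨x, hx, hx'⟩ := inter_nonempty_of_frequently (isClosed_Iic.preimage hg)
    (isClosed_Ici.preimage hg) (hcon.1.mono fun _ => not_lt.1) (hcon.2.mono fun _ => not_lt.1)
  exact (h.trans_le hx').not_ge hx

end LongRay

open LongRay in
theorem BddMap.exists_eventually_eq {g : LongRay → LongRay} (hb : BddMap g) (hg : Continuous g) :
    ∃ c, ∀ᶠ x in atTop, g x = c := by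
  obtain ⟨b, hb⟩ := hb
  set D := {x : LongRay | x ≤ b ∧ frac x ∈ range ((↑) : ℚ → ℝ)}
  have hD : ∀ ⦃x y⦄, x < y → y ≤ b → ∃ z ∈ D, x < z ∧ z < y := fun x y h hy =>
    let ⟨z, hxz, hzy, hz⟩ := exists_frac_rat_between h
    ⟨z, ⟨hzy.le.trans hy, hz⟩, hxz, hzy⟩
  set P := {q ∈ D ×ˢ D | q.1 < q.2}
  have hP : P.Countable :=
    ((countable_setOf_le_frac_rat b).prod (countable_setOf_le_frac_rat b)).mono fun _ => And.left
  have hsep : ∀ᶠ a in atTop, ∀ q ∈ P,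
      (∀ x, a ≤ x → q.1 < g x) ∨ ∀ x, a ≤ x → g x < q.2 := by
    refine (eventually_countable_ball hP).2 fun q hq => ?_
    rcases eventually_gt_or_eventually_lt hg hq.2 with h | h
    · exact (eventually_forall_ge_atTop.2 h).mono fun _ => Or.inl
    · exact (eventually_forall_ge_atTop.2 h).mono fun _ => Or.inr
  obtain ⟨a, ha⟩ := hsep.exists
  have hle : ∀ x, a ≤ x → ∀ y, a ≤ y → g x ≤ g y := fun x hx y hy => not_lt.1 fun hlt => by
    obtain ⟨d, hdD, hyd, hdx⟩ := hD hlt (hb x)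
    obtain ⟨d', hd'D, hdd', hd'x⟩ := hD hdx (hb x)
    rcases ha (d, d') ⟨⟨hdD, hd'D⟩, hdd'⟩ with h | h
    · exact (h y hy).not_gt hyd
    · exact (h x hx).not_gt hd'x
  exact ⟨g a, eventually_atTop.2 ⟨a, fun x hx => (hle x hx a le_rfl).antisymm (hle a le_rfl x hx)⟩⟩

theorem bddMap_of_not_cofinal {g : LongRay → LongRay} (hg : ¬ Cofinal g) : BddMap g := by
  obtain ⟨b, hb⟩ : ∃ b, ∀ x, g x < b := by simpa [Cofinal] using hg
  exact ⟨b, fun x => (hb x).le⟩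

/-- Any continuous embedding `R → R²` has at least one cofinal coordinate projection:
the direction `(0,0)` is not realized. -/
theorem embedding_squared_has_cofinal_coord (f : LongRay → LongRay × LongRay)
    (hf : Topology.IsEmbedding f) :
    Cofinal (fun x => (f x).1) ∨ Cofinal (fun x => (f x).2) := by
  by_contra! h
  obtain ⟨c₁, h₁⟩ := (bddMap_of_not_cofinal h.1).exists_eventually_eq hf.continuous.fst
  obtain ⟨c₂, h₂⟩ := (bddMap_of_not_cofinal h.2).exists_eventually_eq hf.continuous.snd
  have hconst : ∀ᶠ x in atTop, f x = (c₁, c₂) := (h₁.and h₂).mono fun _ hx => Prod.ext hx.1 hx.2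
  obtain ⟨a, ha⟩ := eventually_atTop.1 hconst
  obtain ⟨y, hay⟩ := exists_gt a
  exact hay.ne' (hf.injective ((ha y hay.le).trans (ha a le_rfl).symm))
end
end

section
/- More generally, for any n ≥ 1, if f : R → Rⁿ is a continuous embedding of the long ray into its n-th power, then at least one coordinate projection πᵢ ∘ f is cofinal in R. -/
open Set Topology
noncomputable section

/-!
A continuous map `h : R → R` that is not cofinal is eventually constant on the copy of `ω₁`
in `R`. Below a bound the ray is separable, and for `q < r` the ordinals `α` with `h α ≤ q` and
those with `r ≤ h α` cannot both be unbounded: interleaving them gives an increasing sequence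
whose supremum `γ < ω₁` would satisfy both `h γ ≤ q` and `r ≤ h γ`. Countably many such
eventualities hold simultaneously, because a countable set of countable ordinals is bounded; so
`h` is eventually constant. If no coordinate of `f` were cofinal, `f` would be eventually
constant on `ω₁`, contradicting injectivity.
-/

open Filter

instance Filter.countableInterFilter_prod {α β : Type*} (l₁ : Filter α) (l₂ : Filter β)
    [CountableInterFilter l₁] [CountableInterFilter l₂] : CountableInterFilter (l₁ ×ˢ l₂) :=
  countableInterFilter_inf _ _

abbrev CountableOrdinal : Type 1 := {o : Ordinal.{0} // o < omega1}

namespace CountableOrdinal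

instance : Nonempty CountableOrdinal := ⟨⟨0, Ordinal.omega_pos 1⟩⟩

instance : NoMaxOrder CountableOrdinal :=
  ⟨fun α => ⟨⟨Order.succ α.1, (Cardinal.isSuccLimit_omega 1).succ_lt α.2⟩, Order.lt_succ α.1⟩⟩

def sup {ι : Type*} [Countable ι] (f : ι → CountableOrdinal) : CountableOrdinal :=
  ⟨⨆ i, (f i).1, Ordinal.iSup_lt_omega_one fun i => (f i).2⟩

theorem le_sup {ι : Type*} [Countable ι] (f : ι → CountableOrdinal) (i : ι) : f i ≤ sup f :=
  Ordinal.le_iSup (fun i => (f i).1) i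

theorem lt_sup_iff {ι : Type*} [Countable ι] {f : ι → CountableOrdinal} {α : CountableOrdinal} :
    α < sup f ↔ ∃ i, α < f i :=
  Ordinal.lt_iSup_iff

instance : CountableInterFilter (atTop : Filter CountableOrdinal) where
  countable_sInter_mem S hS hmem := by
    have := hS.to_subtype
    choose γ hγ using fun s : S => mem_atTop_sets.1 (hmem s s.2)
    exact mem_atTop_sets.2 ⟨sup γ, fun α hα s hs => hγ ⟨s, hs⟩ α ((le_sup γ _).trans hα)⟩

theorem countable_Iic (β : CountableOrdinal) : (Iic β).Countable := by
  have hsucc : Order.succ β.1 < omega1 := (Cardinal.isSuccLimit_omega 1).succ_lt β.2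
  have hIio : (Iio (Order.succ β.1)).Countable := by
    rw [← Cardinal.le_aleph0_iff_set_countable, Cardinal.mk_Iio_ordinal, Cardinal.lift_le_aleph0,
      ← Cardinal.lt_aleph_one_iff, ← Cardinal.lt_omega_iff_card_lt]
    exact hsucc
  exact (hIio.preimage Subtype.val_injective).mono fun α (hα : α ≤ β) =>
    show α.1 < Order.succ β.1 from Order.lt_succ_iff.2 hα

end CountableOrdinal

open CountableOrdinal

namespace LongRay

def ofOrd (α : CountableOrdinal) : LongRay := toLex (α, ⟨0, left_mem_Ico.2 zero_lt_one⟩)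

theorem ofOrd_strictMono : StrictMono ofOrd := fun _ _ h => Prod.Lex.lt_iff.2 (Or.inl h)

theorem lt_ofOrd_iff {x : LongRay} {β : CountableOrdinal} : x < ofOrd β ↔ (ofLex x).1 < β := by
  refine Prod.Lex.lt_iff.trans ⟨?_, Or.inl⟩
  rintro (h | ⟨-, h⟩)
  · exact h
  · exact absurd h (not_lt.2 (ofLex x).2.2.1)

theorem tendsto_ofOrd_sup {a : ℕ → CountableOrdinal} (ha : Monotone a) :
    Tendsto (ofOrd ∘ a) atTop (𝓝 (ofOrd (sup a))) := by
  refine tendsto_order.2 ⟨fun x hx => ?_, fun x hx => Eventually.of_forall fun n =>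
    (ofOrd_strictMono.monotone (le_sup a n)).trans_lt hx⟩
  obtain ⟨n, hn⟩ := lt_sup_iff.1 (lt_ofOrd_iff.1 hx)
  filter_upwards [eventually_ge_atTop n] with m hm
  exact lt_ofOrd_iff.2 (hn.trans_le (ha hm))

theorem exists_ofOrd_mem_closure_inter {P Q : CountableOrdinal → Prop}
    (hP : ∃ᶠ α in atTop, P α) (hQ : ∃ᶠ α in atTop, Q α) :
    ∃ γ, ofOrd γ ∈ closure (ofOrd '' {α | P α}) ∩ closure (ofOrd '' {α | Q α}) := by
  choose p hp_ge hpP using frequently_atTop.1 hP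
  choose q hq_ge hqQ using frequently_atTop.1 hQ
  let a : ℕ → CountableOrdinal := fun n => Nat.rec (Classical.arbitrary _) (fun _ α => q (p α)) n
  have ha : Monotone a := monotone_nat_of_le_succ fun n => (hp_ge _).trans (hq_ge _)
  have hlim := tendsto_ofOrd_sup ha
  have hlim_succ := hlim.comp (tendsto_add_atTop_nat 1)
  have hlim_p : Tendsto (fun n => ofOrd (p (a n))) atTop (𝓝 (ofOrd (sup a))) :=
    tendsto_of_tendsto_of_tendsto_of_le_of_le hlim hlim_succ
      (fun n => ofOrd_strictMono.monotone (hp_ge _)) (fun n => ofOrd_strictMono.monotone (hq_ge _))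
  exact ⟨sup a, mem_closure_of_tendsto hlim_p (Eventually.of_forall fun n => ⟨_, hpP _, rfl⟩),
    mem_closure_of_tendsto hlim_succ (Eventually.of_forall fun n => ⟨_, hqQ _, rfl⟩)⟩

theorem eventually_not_and_of_disjoint {X : Type*} [TopologicalSpace X] {h : LongRay → X}
    (hh : Continuous h) {C D : Set X} (hC : IsClosed C) (hD : IsClosed D) (hCD : Disjoint C D) :
    ∀ᶠ p in atTop ×ˢ atTop, ¬ (h (ofOrd p.1) ∈ C ∧ h (ofOrd p.2) ∈ D) := by
  by_contra hfreq
  simp only [not_eventually, not_not] at hfreq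
  obtain ⟨γ, hγC, hγD⟩ := exists_ofOrd_mem_closure_inter
    (tendsto_fst.frequently (p := fun α => h (ofOrd α) ∈ C) (hfreq.mono fun _ hp => hp.1))
    (tendsto_snd.frequently (p := fun β => h (ofOrd β) ∈ D) (hfreq.mono fun _ hp => hp.2))
  have hC' := hC.closure_subset (map_mem_closure hh hγC (by rintro _ ⟨α, hα, rfl⟩; exact hα))
  have hD' := hD.closure_subset (map_mem_closure hh hγD (by rintro _ ⟨α, hα, rfl⟩; exact hα))
  exact hCD.ne_of_mem hC' hD' rfl

theorem exists_countable_dense_below (b : LongRay) :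
    ∃ D : Set LongRay, D.Countable ∧ ∀ x y, x < y → y ≤ b → ∃ d ∈ D, x < d ∧ d < y := by
  refine ⟨toLex '' (Iic (ofLex b).1 ×ˢ (Subtype.val ⁻¹' range ((↑) : ℚ → ℝ))),
    ((countable_Iic _).prod ((countable_range _).preimage Subtype.val_injective)).image _, ?_⟩
  intro x y hxy hyb
  have hx_fst : (ofLex x).1 ≤ (ofLex b).1 := Prod.Lex.monotone_fst _ _ (hxy.le.trans hyb)
  have hx_snd := (ofLex x).2.2
  obtain ⟨t, ht, hxt, hty⟩ : ∃ t : Ico (0 : ℝ) 1, t.1 ∈ range ((↑) : ℚ → ℝ) ∧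
      (ofLex x).2 < t ∧ (toLex ((ofLex x).1, t) : LongRay) < y := by
    rcases Prod.Lex.lt_iff.1 hxy with hlt | ⟨heq, hlt⟩
    · obtain ⟨q, hxq, hq1⟩ := exists_rat_btwn hx_snd.2
      exact ⟨⟨q, hx_snd.1.trans hxq.le, hq1⟩, ⟨q, rfl⟩, hxq, Prod.Lex.lt_iff.2 (Or.inl hlt)⟩
    · obtain ⟨q, hxq, hqy⟩ := exists_rat_btwn (show ((ofLex x).2 : ℝ) < (ofLex y).2 from hlt)
      exact ⟨⟨q, hx_snd.1.trans hxq.le, hqy.trans (ofLex y).2.2.2⟩, ⟨q, rfl⟩, hxq,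
        Prod.Lex.lt_iff.2 (Or.inr ⟨heq, hqy⟩)⟩
  exact ⟨_, ⟨((ofLex x).1, t), ⟨hx_fst, ht⟩, rfl⟩, Prod.Lex.lt_iff.2 (Or.inr ⟨rfl, hxt⟩), hty⟩

theorem exists_eventually_ofOrd_eq_of_not_cofinal {h : LongRay → LongRay} (hh : Continuous h)
    (hcof : ¬ Cofinal h) : ∃ c, ∀ᶠ α in atTop, h (ofOrd α) = c := by
  obtain ⟨b, hb⟩ : ∃ b, ∀ x, h x < b := by simpa [Cofinal] using hcof
  obtain ⟨D, hD_countable, hD_dense⟩ := exists_countable_dense_below b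
  have hsep : ∀ᶠ p in atTop ×ˢ atTop, ∀ qr ∈ {qr ∈ D ×ˢ D | qr.1 < qr.2},
      ¬ (h (ofOrd p.1) ≤ qr.1 ∧ qr.2 ≤ h (ofOrd p.2)) :=
    (eventually_countable_ball ((hD_countable.prod hD_countable).mono (sep_subset _ _))).2
      fun qr hqr => eventually_not_and_of_disjoint hh isClosed_Iic isClosed_Ici
        (Iic_disjoint_Ici.2 hqr.2.not_ge)
  have hanti :
      ∀ᶠ p : CountableOrdinal × CountableOrdinal in atTop, h (ofOrd p.2) ≤ h (ofOrd p.1) := by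
    rw [← prod_atTop_atTop_eq]
    filter_upwards [hsep] with p hp
    by_contra! hlt
    obtain ⟨q, hqD, hq₁, hq₂⟩ := hD_dense _ _ hlt (hb _).le
    obtain ⟨r, hrD, hr₁, hr₂⟩ := hD_dense _ _ hq₂ (hb _).le
    exact hp (q, r) ⟨⟨hqD, hrD⟩, hr₁⟩ ⟨hq₁.le, hr₂.le⟩
  obtain ⟨γ, hγ⟩ := eventually_atTop_prod_self.1 hanti
  exact ⟨h (ofOrd γ), eventually_atTop.2
    ⟨γ, fun α hα => (hγ γ α le_rfl hα).antisymm (hγ α γ hα le_rfl)⟩⟩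

end LongRay

theorem embedding_pow_has_cofinal_coord_general (n : ℕ)
    (f : LongRay → Fin n → LongRay) (hf : Topology.IsEmbedding f) :
    ∃ i : Fin n, Cofinal (fun x => f x i) := by
  by_contra! hcof
  choose c hc using fun i => LongRay.exists_eventually_ofOrd_eq_of_not_cofinal
    ((continuous_apply i).comp hf.continuous) (hcof i)
  obtain ⟨γ, hγ⟩ := eventually_atTop.1 (eventually_all.2 hc)
  obtain ⟨β, hγβ⟩ := exists_gt γ
  have hfeq : f (LongRay.ofOrd β) = f (LongRay.ofOrd γ) :=
    funext fun i => (hγ β hγβ.le i).trans (hγ γ le_rfl i).symm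
  exact hγβ.ne' (LongRay.ofOrd_strictMono.injective (hf.injective hfeq))

/-- For any `n ≥ 1`, a continuous embedding `R → Rⁿ` has at least one cofinal
coordinate projection. -/
theorem embedding_pow_has_cofinal_coord (n : ℕ) (hn : 1 ≤ n)
    (f : LongRay → Fin n → LongRay) (hf : Topology.IsEmbedding f) :
    ∃ i : Fin n, Cofinal (fun x => f x i) :=
  embedding_pow_has_cofinal_coord_general n f hf
end
end
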